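/- Let n ≥ 1, let B ∈ ℝ^{n×n} be a symmetric positive-definite matrix, μ ∈ ℝⁿ, and let 1 < q < 1 + 2/n. Then the integral over ℝⁿ of [1 + (q-1)·(x-μ)ᵀB(x-μ)]^{-q/(q-1)} (the unnormalized q-escort integrand) converges and equals (q-1)^{-n/2}·(det B)^{-1/2}·π^{n/2}·Γ(q/(q-1) - n/2)/Γ(q/(q-1)). -/

import Mathlib

/-!
After the translation `x ↦ x - μ`, write `(q - 1) • B = Sᵀ * S` with `S` invertible; the linear
substitution `w = S v` (Jacobian `|det S|⁻¹ = det ((q - 1) • B) ^ (-1/2)`) reduces the integral to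
`∫ (1 + ‖w‖²) ^ (-s)` over Euclidean space, with `s = q / (q - 1) > n / 2`. In polar coordinates
this is a radial integral which the substitution `t = r²` turns into the beta integral
`∫₀^∞ t ^ (a - 1) (1 + t) ^ (-(a + b)) dt = Γ(a) Γ(b) / Γ(a + b)` with `a = n / 2`, `b = s - n / 2`.
-/

open MeasureTheory Matrix Real Set Module

theorem integral_Ioo_rpow_mul_one_sub_rpow {a b : ℝ} (ha : 0 < a) (hb : 0 < b) :
    ∫ x in Ioo (0 : ℝ) 1, x ^ (a - 1) * (1 - x) ^ (b - 1) = Gamma a * Gamma b / Gamma (a + b) := by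
  have hbeta : Complex.betaIntegral a b =
      ((∫ x in Ioo (0 : ℝ) 1, x ^ (a - 1) * (1 - x) ^ (b - 1) : ℝ) : ℂ) := by
    rw [Complex.betaIntegral, intervalIntegral.integral_of_le zero_le_one,
      integral_Ioc_eq_integral_Ioo]
    refine (setIntegral_congr_fun measurableSet_Ioo fun x ⟨hx0, hx1⟩ => ?_).trans integral_ofReal
    change _ = ((x ^ (a - 1) * (1 - x) ^ (b - 1) : ℝ) : ℂ)
    rw [Complex.ofReal_mul, Complex.ofReal_cpow hx0.le, Complex.ofReal_cpow (sub_nonneg.2 hx1.le)]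
    push_cast
    rfl
  have h := Complex.betaIntegral_eq_Gamma_mul_div (a : ℂ) b (by simpa) (by simpa)
  rw [hbeta, ← Complex.ofReal_add, Complex.Gamma_ofReal, Complex.Gamma_ofReal,
    Complex.Gamma_ofReal] at h
  exact_mod_cast h

theorem image_div_one_sub_Ioo : (fun u : ℝ => u / (1 - u)) '' Ioo 0 1 = Ioi 0 := by
  ext t
  refine ⟨?_, fun ht => ⟨t / (1 + t), ?_, ?_⟩⟩
  · rintro ⟨u, ⟨hu0, hu1⟩, rfl⟩
    exact div_pos hu0 (sub_pos.2 hu1)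
  · have ht : (0 : ℝ) < t := ht
    exact ⟨by positivity, (div_lt_one (by positivity)).2 (by linarith)⟩
  · have ht : (0 : ℝ) < t := ht
    field_simp
    ring

theorem integral_Ioi_rpow_mul_one_add_rpow_neg {a b : ℝ} (ha : 0 < a) (hb : 0 < b) :
    ∫ t in Ioi (0 : ℝ), t ^ (a - 1) * (1 + t) ^ (-(a + b)) = Gamma a * Gamma b / Gamma (a + b) := by
  have hderiv : ∀ u ∈ Ioo (0 : ℝ) 1,
      HasDerivWithinAt (fun u : ℝ => u / (1 - u)) ((1 - u) ^ 2)⁻¹ (Ioo 0 1) u := by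
    intro u ⟨_, hu1⟩
    have := (hasDerivAt_id' u).div ((hasDerivAt_const u 1).sub (hasDerivAt_id' u))
      (sub_pos.2 hu1).ne'
    simpa [Pi.div_def, Pi.sub_def] using this.hasDerivWithinAt
  have hinj : InjOn (fun u : ℝ => u / (1 - u)) (Ioo 0 1) := by
    intro u ⟨_, hu1⟩ v ⟨_, hv1⟩ h
    have := (sub_pos.2 hu1).ne'
    have := (sub_pos.2 hv1).ne'
    field_simp at h
    linarith
  rw [← integral_Ioo_rpow_mul_one_sub_rpow ha hb, ← image_div_one_sub_Ioo,
    integral_image_eq_integral_abs_deriv_smul measurableSet_Ioo hderiv hinj]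
  refine setIntegral_congr_fun measurableSet_Ioo fun u ⟨hu0, hu1⟩ => ?_
  have hu : 0 < 1 - u := sub_pos.2 hu1
  have h1 : 1 + u / (1 - u) = (1 - u)⁻¹ := by field_simp; ring
  rw [smul_eq_mul, h1, abs_of_pos (by positivity), div_rpow hu0.le hu.le, inv_rpow hu.le,
    ← rpow_neg hu.le, ← rpow_natCast, ← rpow_neg hu.le, div_eq_mul_inv, ← rpow_neg hu.le, neg_neg]
  have hexp : (1 - u) ^ (-(2 : ℝ)) * (1 - u) ^ (-(a - 1)) * (1 - u) ^ (a + b) =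
      (1 - u) ^ (b - 1) := by
    rw [← rpow_add hu, ← rpow_add hu]
    ring_nf
  push_cast
  linear_combination u ^ (a - 1) * hexp

theorem integral_Ioi_rpow_mul_one_add_sq_rpow_neg {a s : ℝ} (ha : 0 < a) (has : a < s) :
    ∫ y in Ioi (0 : ℝ), y ^ (2 * a - 1) * (1 + y ^ 2) ^ (-s) =
      Gamma a * Gamma (s - a) / (2 * Gamma s) := by
  have h := integral_Ioi_rpow_mul_one_add_rpow_neg ha (sub_pos.2 has)
  rw [add_sub_cancel, ← integral_comp_rpow_Ioi_of_pos two_pos] at h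
  rw [div_mul_eq_div_div_swap, ← h, ← integral_div]
  refine setIntegral_congr_fun measurableSet_Ioi fun y (hy : 0 < y) => ?_
  have hpow : y ^ (2 * a - 1) = y ^ ((2 : ℝ) - 1) * (y ^ (2 : ℝ)) ^ (a - 1) := by
    rw [← rpow_mul hy.le, ← rpow_add hy]
    ring_nf
  rw [smul_eq_mul, hpow, rpow_two]
  ring

section InnerProductSpace

variable {E : Type*} [NormedAddCommGroup E] [InnerProductSpace ℝ E] [FiniteDimensional ℝ E]
  [MeasurableSpace E] [BorelSpace E]

theorem integral_one_add_norm_sq_rpow_neg [Nontrivial E] {s : ℝ} (hs : finrank ℝ E / 2 < s) :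
    ∫ x : E, (1 + ‖x‖ ^ 2) ^ (-s) =
      π ^ ((finrank ℝ E : ℝ) / 2) * Gamma (s - finrank ℝ E / 2) / Gamma s := by
  rw [integral_fun_norm_addHaar volume (fun y => (1 + y ^ 2) ^ (-s))]
  set d := finrank ℝ E
  have hd : 0 < d := finrank_pos
  have hd' : (0 : ℝ) < d / 2 := by positivity
  have hradial : ∫ y in Ioi (0 : ℝ), y ^ (d - 1) • (1 + y ^ 2) ^ (-s) =
      Gamma (d / 2) * Gamma (s - d / 2) / (2 * Gamma s) := by
    rw [← integral_Ioi_rpow_mul_one_add_sq_rpow_neg hd' hs]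
    refine setIntegral_congr_fun measurableSet_Ioi fun y (hy : 0 < y) => ?_
    rw [smul_eq_mul, ← rpow_natCast, Nat.cast_sub hd]
    ring_nf
  have hball : volume.real (Metric.ball (0 : E) 1) = π ^ ((d : ℝ) / 2) / Gamma (d / 2 + 1) := by
    rw [measureReal_def, InnerProductSpace.volume_ball, ENNReal.ofReal_one, one_pow, one_mul,
      ENNReal.toReal_ofReal (by positivity), ← rpow_natCast, ← rpow_div_two_eq_sqrt _ pi_pos.le]
  rw [hradial, hball, Gamma_add_one hd'.ne', nsmul_eq_mul, smul_eq_mul]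
  have := (Gamma_pos_of_pos hd').ne'
  have := (Gamma_pos_of_pos (hd'.trans hs)).ne'
  field_simp

end InnerProductSpace

namespace MeasureTheory.Measure

variable {E F : Type*} [NormedAddCommGroup E] [NormedSpace ℝ E] [FiniteDimensional ℝ E]
  [MeasurableSpace E] [BorelSpace E] (μ : Measure E) [μ.IsAddHaarMeasure]
  [NormedAddCommGroup F] {L : E →ₗ[ℝ] E}

theorem _root_.LinearMap.measurableEmbedding_of_det_ne_zero (hL : LinearMap.det L ≠ 0) :
    MeasurableEmbedding L :=
  (L.equivOfDetNeZero hL).toContinuousLinearEquiv.toHomeomorph.measurableEmbedding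

theorem integrable_comp_linearMap_iff (hL : LinearMap.det L ≠ 0) {g : E → F} :
    Integrable (fun x => g (L x)) μ ↔ Integrable g μ := by
  rw [← Function.comp_def, ← (L.measurableEmbedding_of_det_ne_zero hL).integrable_map_iff,
    map_linearMap_addHaar_eq_smul_addHaar μ hL,
    integrable_smul_measure (by simpa using hL) ENNReal.ofReal_ne_top]

theorem integral_comp_linearMap [NormedSpace ℝ F] (hL : LinearMap.det L ≠ 0) (g : E → F) :
    ∫ x, g (L x) ∂μ = |(LinearMap.det L)⁻¹| • ∫ x, g x ∂μ := by
  rw [← (L.measurableEmbedding_of_det_ne_zero hL).integral_map,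
    map_linearMap_addHaar_eq_smul_addHaar μ hL, integral_smul_measure,
    ENNReal.toReal_ofReal (abs_nonneg _)]

end MeasureTheory.Measure

variable {ι : Type*} [Fintype ι]

theorem EuclideanSpace.norm_toLp_sq (v : ι → ℝ) : ‖WithLp.toLp 2 v‖ ^ 2 = v ⬝ᵥ v := by
  rw [← real_inner_self_eq_norm_sq, EuclideanSpace.inner_toLp_toLp, star_trivial]

theorem integrable_one_add_dotProduct_self_rpow_neg {s : ℝ} (hs : Fintype.card ι / 2 < s) :
    Integrable fun v : ι → ℝ => (1 + v ⬝ᵥ v) ^ (-s) := by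
  have h := integrable_rpow_neg_one_add_norm_sq (E := EuclideanSpace ℝ ι) (μ := volume)
    (r := 2 * s) (by rw [finrank_euclideanSpace]; linarith)
  rw [← (PiLp.volume_preserving_toLp ι).integrable_comp_emb
    (MeasurableEquiv.toLp 2 _).measurableEmbedding, show -(2 * s) / 2 = -s by ring] at h
  simpa [Function.comp_def, EuclideanSpace.norm_toLp_sq] using h

theorem integral_one_add_dotProduct_self_rpow_neg [Nonempty ι] {s : ℝ}
    (hs : Fintype.card ι / 2 < s) :
    ∫ v : ι → ℝ, (1 + v ⬝ᵥ v) ^ (-s) =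
      π ^ ((Fintype.card ι : ℝ) / 2) * Gamma (s - Fintype.card ι / 2) / Gamma s := by
  have h := integral_one_add_norm_sq_rpow_neg (E := EuclideanSpace ℝ ι)
    (by rwa [finrank_euclideanSpace])
  rw [← (PiLp.volume_preserving_toLp ι).integral_comp
    (MeasurableEquiv.toLp 2 _).measurableEmbedding, finrank_euclideanSpace] at h
  simpa [EuclideanSpace.norm_toLp_sq] using h

namespace Matrix

theorem dotProduct_transpose_mul_self_mulVec {m n R : Type*} [Fintype m] [Fintype n]
    [CommSemiring R] (S : Matrix m n R) (v : n → R) :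
    v ⬝ᵥ (Sᵀ * S) *ᵥ v = S *ᵥ v ⬝ᵥ S *ᵥ v := by
  rw [← mulVec_mulVec, dotProduct_mulVec, vecMul_transpose]

variable [DecidableEq ι]

open scoped MatrixOrder in
theorem PosDef.exists_det_ne_zero_eq_transpose_mul_self {C : Matrix ι ι ℝ} (hC : C.PosDef) :
    ∃ S : Matrix ι ι ℝ, S.det ≠ 0 ∧ C = Sᵀ * S := by
  obtain ⟨S, hS, rfl⟩ :=
    CStarAlgebra.isStrictlyPositive_iff_eq_star_mul_self.mp hC.isStrictlyPositive
  exact ⟨S, ((isUnit_iff_isUnit_det S).mp hS).ne_zero,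
    by rw [star_eq_conjTranspose, conjTranspose_eq_transpose_of_trivial]⟩

theorem integrable_one_add_dotProduct_mulVec_rpow_neg {C : Matrix ι ι ℝ} (hC : C.PosDef) {s : ℝ}
    (hs : Fintype.card ι / 2 < s) :
    Integrable fun v : ι → ℝ => (1 + v ⬝ᵥ C *ᵥ v) ^ (-s) := by
  obtain ⟨S, hS, rfl⟩ := hC.exists_det_ne_zero_eq_transpose_mul_self
  simp_rw [dotProduct_transpose_mul_self_mulVec]
  exact (Measure.integrable_comp_linearMap_iff volume (L := toLin' S)
    (by rwa [LinearMap.det_toLin']) (g := fun w : ι → ℝ => (1 + w ⬝ᵥ w) ^ (-s))).2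
    (integrable_one_add_dotProduct_self_rpow_neg hs)

theorem integral_one_add_dotProduct_mulVec_rpow_neg [Nonempty ι] {C : Matrix ι ι ℝ}
    (hC : C.PosDef) {s : ℝ} (hs : Fintype.card ι / 2 < s) :
    ∫ v : ι → ℝ, (1 + v ⬝ᵥ C *ᵥ v) ^ (-s) =
      C.det ^ (-(1 : ℝ) / 2) * π ^ ((Fintype.card ι : ℝ) / 2) *
        Gamma (s - Fintype.card ι / 2) / Gamma s := by
  obtain ⟨S, hS, rfl⟩ := hC.exists_det_ne_zero_eq_transpose_mul_self
  simp_rw [dotProduct_transpose_mul_self_mulVec]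
  have h := Measure.integral_comp_linearMap volume (L := toLin' S)
    (by rwa [LinearMap.det_toLin']) (fun w : ι → ℝ => (1 + w ⬝ᵥ w) ^ (-s))
  simp only [toLin'_apply] at h
  rw [h, integral_one_add_dotProduct_self_rpow_neg hs, LinearMap.det_toLin', det_mul,
    det_transpose, ← sq, ← sq_abs, ← rpow_natCast, ← rpow_mul (abs_nonneg _), smul_eq_mul,
    abs_inv, Nat.cast_ofNat, show (2 : ℝ) * (-1 / 2) = -1 by norm_num, rpow_neg_one]
  ring

end Matrix

theorem integral_qGaussian_escort_kernel_general (n : ℕ) (hn : 1 ≤ n) (B : Matrix (Fin n) (Fin n) ℝ)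
    (hpos : B.PosDef) (μ : Fin n → ℝ) (q : ℝ)
    (hq1 : 1 < q) (hq2 : q < 1 + 2 / (n : ℝ)) :
    Integrable (fun x : Fin n → ℝ =>
      (1 + (q - 1) * ((x - μ) ⬝ᵥ B.mulVec (x - μ))) ^ (-(q / (q - 1)))) ∧
    (∫ x : Fin n → ℝ, (1 + (q - 1) * ((x - μ) ⬝ᵥ B.mulVec (x - μ))) ^ (-(q / (q - 1)))) =
      (q - 1) ^ (-(n : ℝ) / 2) * B.det ^ (-(1 : ℝ) / 2) * Real.pi ^ ((n : ℝ) / 2) *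
        Real.Gamma (q / (q - 1) - (n : ℝ) / 2) / Real.Gamma (q / (q - 1)) := by
  have : Nonempty (Fin n) := ⟨⟨0, hn⟩⟩
  have hq : 0 < q - 1 := sub_pos.2 hq1
  have hs : (Fintype.card (Fin n) : ℝ) / 2 < q / (q - 1) := by
    have hn' : (0 : ℝ) < n := by exact_mod_cast hn
    rw [Fintype.card_fin, lt_div_iff₀ hq]
    have := (lt_div_iff₀' hn').1 (sub_lt_iff_lt_add'.2 hq2)
    linarith
  have hC : ((q - 1) • B).PosDef := hpos.smul hq
  have hform : ∀ v : Fin n → ℝ, (q - 1) * (v ⬝ᵥ B *ᵥ v) = v ⬝ᵥ ((q - 1) • B) *ᵥ v := fun v => by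
    rw [smul_mulVec, dotProduct_smul, smul_eq_mul]
  simp_rw [hform]
  refine ⟨(integrable_one_add_dotProduct_mulVec_rpow_neg hC hs).comp_sub_right μ, ?_⟩
  rw [integral_sub_right_eq_self (fun v => (1 + v ⬝ᵥ ((q - 1) • B) *ᵥ v) ^ (-(q / (q - 1)))),
    integral_one_add_dotProduct_mulVec_rpow_neg hC hs, det_smul, Fintype.card_fin,
    mul_rpow (pow_nonneg hq.le n) hpos.det_pos.le, ← rpow_natCast, ← rpow_mul hq.le]
  ring_nf

/-- For `n ≥ 1`, a symmetric positive-definite `B`, `μ ∈ ℝⁿ`, and `1 < q < 1 + 2/n`,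
the integral over `ℝⁿ` of `[1 + (q-1)·(x-μ)ᵀB(x-μ)]^(-q/(q-1))` (the unnormalized
q-escort integrand) converges and equals
`(q-1)^(-n/2)·(det B)^(-1/2)·π^(n/2)·Γ(q/(q-1) - n/2)/Γ(q/(q-1))`. -/
theorem integral_qGaussian_escort_kernel (n : ℕ) (hn : 1 ≤ n) (B : Matrix (Fin n) (Fin n) ℝ)
    (hsymm : B.IsSymm) (hpos : B.PosDef) (μ : Fin n → ℝ) (q : ℝ)
    (hq1 : 1 < q) (hq2 : q < 1 + 2 / (n : ℝ)) :
    Integrable (fun x : Fin n → ℝ =>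
      (1 + (q - 1) * ((x - μ) ⬝ᵥ B.mulVec (x - μ))) ^ (-(q / (q - 1)))) ∧
    (∫ x : Fin n → ℝ, (1 + (q - 1) * ((x - μ) ⬝ᵥ B.mulVec (x - μ))) ^ (-(q / (q - 1)))) =
      (q - 1) ^ (-(n : ℝ) / 2) * B.det ^ (-(1 : ℝ) / 2) * Real.pi ^ ((n : ℝ) / 2) *
        Real.Gamma (q / (q - 1) - (n : ℝ) / 2) / Real.Gamma (q / (q - 1)) :=
  integral_qGaussian_escort_kernel_general n hn B hpos μ q hq1 hq2
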